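/- arXiv:2504.09926 — 5 statements merged into one kernel-verified Lean document; each statement's English description precedes it below -/
import Mathlib

section
/- Let (X,m) be a probability space, κ > 0 and p ∈ (0,1) constants, and let P and Q be bounded linear operators on the real Hilbert space L²(X,m) such that: (1) the cone L²₊(X,m) of nonnegative functions is invariant under the adjoints P* and Q*; (2) P𝟙 = Q𝟙 = 𝟙 for the constant function 𝟙; (3) ‖P*f‖ ≤ (1−κ)‖f‖ for all f ∈ L²₀(X,m); (4) ‖Q*‖ < 1 + κp/(1−p). Then the adjoint T* of the operator T = pP + (1−p)Q has a unique fixed vector φ in the affine hyperplane {f ∈ L²(X,m) : ⟨f,𝟙⟩ = 1}, i.e. T*φ = φ and ⟨φ,𝟙⟩ = 1, and moreover φ ≥ 0 almost everywhere. -/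
/-!
`T*` preserves the integral `⟨·, 𝟙⟩` because `T𝟙 = 𝟙`, so it maps the closed affine hyperplane
`{∫ f = 1}` into itself. On differences of points of that hyperplane, which have mean zero,
`‖T* f‖ ≤ (p (1 - κ) + (1 - p) ‖Q*‖) ‖f‖`, and hypothesis (4) makes this constant `< 1`. Banach's
fixed point theorem gives the unique fixed vector, as the limit of the iterates `T*ⁿ 𝟙`; these are
nonnegative because `T*` preserves the closed cone `L²₊`.
-/

open MeasureTheory ContinuousLinearMap Filter Topology Function

/-- The constant function `𝟙` as an element of `L²(X,m)` for a finite measure `m`. -/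
noncomputable def oneL2 {X : Type*} [MeasurableSpace X] (m : Measure X)
    [IsFiniteMeasure m] : Lp ℝ 2 m :=
  (memLp_const (1 : ℝ)).toLp fun _ => (1 : ℝ)

section ContractionOnLevelSets

variable {E : Type*} [NormedAddCommGroup E] [NormedSpace ℝ E]
  {ℓ : E →L[ℝ] ℝ} {A : E →L[ℝ] E} {c : ℝ}

theorem norm_map_sub_map_le_of_apply_eq (hA : ∀ f, ℓ f = 0 → ‖A f‖ ≤ c * ‖f‖) {f g : E}
    (h : ℓ f = ℓ g) : ‖A f - A g‖ ≤ c * ‖f - g‖ := by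
  rw [← map_sub]
  exact hA _ (by rw [map_sub, h, sub_self])

theorem eq_of_isFixedPt_of_apply_eq (hc : c < 1) (hA : ∀ f, ℓ f = 0 → ‖A f‖ ≤ c * ‖f‖)
    {f g : E} (hf : IsFixedPt A f) (hg : IsFixedPt A g) (h : ℓ f = ℓ g) : f = g := by
  have hle := norm_map_sub_map_le_of_apply_eq hA h
  rw [hf.eq, hg.eq] at hle
  have : ‖f - g‖ = 0 := by nlinarith [norm_nonneg (f - g)]
  exact sub_eq_zero.1 (norm_eq_zero.1 this)

theorem exists_isFixedPt_tendsto_iterate [CompleteSpace E] (hℓA : ∀ f, ℓ (A f) = ℓ f)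
    (hc : c < 1) (hA : ∀ f, ℓ f = 0 → ‖A f‖ ≤ c * ‖f‖) (x₀ : E) :
    ∃ φ, IsFixedPt A φ ∧ ℓ φ = ℓ x₀ ∧ Tendsto (fun n ↦ A^[n] x₀) atTop (𝓝 φ) := by
  set S : Set E := ℓ ⁻¹' {ℓ x₀}
  have hS : IsComplete S := (isClosed_singleton.preimage ℓ.continuous).isComplete
  have hAS : Set.MapsTo A S S := fun f hf ↦ (hℓA f).trans hf
  have hcontr : ContractingWith c.toNNReal (hAS.restrict A S S) := by
    refine ⟨by simpa using hc, LipschitzWith.of_dist_le_mul fun f g ↦ ?_⟩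
    rw [Subtype.dist_eq, Subtype.dist_eq, dist_eq_norm, dist_eq_norm]
    calc ‖A f - A g‖ ≤ c * ‖(f : E) - g‖ :=
          norm_map_sub_map_le_of_apply_eq hA (f.2.trans g.2.symm)
      _ ≤ c.toNNReal * ‖(f : E) - g‖ := by gcongr; exact c.le_coe_toNNReal
  obtain ⟨φ, hφS, hφ, htends, -⟩ :=
    hcontr.exists_fixedPoint' hS hAS (x := x₀) rfl (edist_ne_top _ _)
  exact ⟨φ, hφ, hφS, htends⟩

end ContractionOnLevelSets

theorem norm_smul_add_one_sub_smul_apply_le {E : Type*} [NormedAddCommGroup E]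
    [NormedSpace ℝ E] {A B : E →L[ℝ] E} {p a b : ℝ} (hp0 : 0 ≤ p) (hp1 : p ≤ 1) {f : E}
    (hA : ‖A f‖ ≤ a * ‖f‖) (hB : ‖B f‖ ≤ b * ‖f‖) :
    ‖(p • A + (1 - p) • B) f‖ ≤ (p * a + (1 - p) * b) * ‖f‖ := by
  have hq : 0 ≤ 1 - p := sub_nonneg.2 hp1
  calc ‖(p • A + (1 - p) • B) f‖ ≤ p * ‖A f‖ + (1 - p) * ‖B f‖ := by
        refine (norm_add_le (p • A f) ((1 - p) • B f)).trans_eq ?_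
        rw [norm_smul, norm_smul, Real.norm_of_nonneg hp0, Real.norm_of_nonneg hq]
    _ ≤ p * (a * ‖f‖) + (1 - p) * (b * ‖f‖) := by gcongr
    _ = (p * a + (1 - p) * b) * ‖f‖ := by ring

theorem MeasureTheory.Lp.smul_nonneg {X : Type*} [MeasurableSpace X] {m : Measure X} {q : ENNReal} {c : ℝ}
    (hc : 0 ≤ c) {f : Lp ℝ q m} (hf : 0 ≤ f) : 0 ≤ c • f := by
  rw [← Lp.coeFn_nonneg] at hf ⊢
  filter_upwards [Lp.coeFn_smul c f, hf] with x hcf hfx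
  rw [hcf, Pi.smul_apply, Pi.zero_apply]
  exact mul_nonneg hc hfx

section OneL2

variable {X : Type*} [MeasurableSpace X] {m : Measure X}

theorem coeFn_oneL2 [IsFiniteMeasure m] : oneL2 m =ᵐ[m] 1 :=
  MemLp.coeFn_toLp _

theorem integral_eq_inner_oneL2 [IsFiniteMeasure m] (f : Lp ℝ 2 m) :
    ∫ x, f x ∂m = inner ℝ (oneL2 m) f := by
  rw [L2.inner_def]
  refine integral_congr_ae ?_
  filter_upwards [coeFn_oneL2 (m := m)] with x hx
  simp [hx]

theorem oneL2_nonneg [IsFiniteMeasure m] : 0 ≤ oneL2 m := by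
  rw [← Lp.coeFn_nonneg]
  filter_upwards [coeFn_oneL2 (m := m)] with x hx
  simp [hx]

theorem integral_oneL2 [IsProbabilityMeasure m] : ∫ x, oneL2 m x ∂m = 1 := by
  simp [integral_congr_ae coeFn_oneL2]

theorem integral_adjoint_apply_of_map_oneL2 [IsFiniteMeasure m] {T : Lp ℝ 2 m →L[ℝ] Lp ℝ 2 m}
    (hT : T (oneL2 m) = oneL2 m) (f : Lp ℝ 2 m) : ∫ x, adjoint T f x ∂m = ∫ x, f x ∂m := by
  rw [integral_eq_inner_oneL2, integral_eq_inner_oneL2, adjoint_inner_right, hT]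

end OneL2

theorem unique_positive_fixed_vector_general
    {X : Type*} [MeasurableSpace X] (m : Measure X) [IsProbabilityMeasure m]
    (κ p : ℝ) (hp0 : 0 < p) (hp1 : p < 1)
    (P Q : Lp ℝ 2 m →L[ℝ] Lp ℝ 2 m)
    (hPpos : ∀ f : Lp ℝ 2 m, 0 ≤ f → 0 ≤ ContinuousLinearMap.adjoint P f)
    (hQpos : ∀ f : Lp ℝ 2 m, 0 ≤ f → 0 ≤ ContinuousLinearMap.adjoint Q f)
    (hP1 : P (oneL2 m) = oneL2 m) (hQ1 : Q (oneL2 m) = oneL2 m)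
    (hPgap : ∀ f : Lp ℝ 2 m, (∫ x, f x ∂m) = 0 →
      ‖ContinuousLinearMap.adjoint P f‖ ≤ (1 - κ) * ‖f‖)
    (hQnorm : ‖ContinuousLinearMap.adjoint Q‖ < 1 + κ * p / (1 - p)) :
    ∃ φ : Lp ℝ 2 m,
      (ContinuousLinearMap.adjoint (p • P + (1 - p) • Q) φ = φ ∧ (∫ x, φ x ∂m) = 1 ∧ 0 ≤ φ) ∧
      ∀ ψ : Lp ℝ 2 m,
        ContinuousLinearMap.adjoint (p • P + (1 - p) • Q) ψ = ψ → (∫ x, ψ x ∂m) = 1 →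
        ψ = φ := by
  set ℓ : Lp ℝ 2 m →L[ℝ] ℝ := innerSL ℝ (oneL2 m)
  have hℓ (f : Lp ℝ 2 m) : ℓ f = ∫ x, f x ∂m := (integral_eq_inner_oneL2 f).symm
  have hadj : adjoint (p • P + (1 - p) • Q) = p • adjoint P + (1 - p) • adjoint Q := by simp
  have hT1 : (p • P + (1 - p) • Q) (oneL2 m) = oneL2 m := by simp [hP1, hQ1, ← add_smul]
  have hc : p * (1 - κ) + (1 - p) * ‖adjoint Q‖ < 1 := by
    have hq : 0 < 1 - p := sub_pos.2 hp1
    have := mul_lt_mul_of_pos_left hQnorm hq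
    rw [mul_add, mul_div_cancel₀ _ hq.ne'] at this
    linarith
  have hcontr (f : Lp ℝ 2 m) (hf : ℓ f = 0) :
      ‖adjoint (p • P + (1 - p) • Q) f‖ ≤ (p * (1 - κ) + (1 - p) * ‖adjoint Q‖) * ‖f‖ := by
    rw [hadj]
    exact norm_smul_add_one_sub_smul_apply_le hp0.le hp1.le (hPgap f ((hℓ f).symm.trans hf))
      ((adjoint Q).le_opNorm f)
  have hpos (f : Lp ℝ 2 m) (hf : 0 ≤ f) : 0 ≤ adjoint (p • P + (1 - p) • Q) f := by
    rw [hadj]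
    exact add_nonneg (Lp.smul_nonneg hp0.le (hPpos f hf))
      (Lp.smul_nonneg (sub_nonneg.2 hp1.le) (hQpos f hf))
  obtain ⟨φ, hφ, hℓφ, htends⟩ := exists_isFixedPt_tendsto_iterate
    (fun f ↦ by simp only [hℓ, integral_adjoint_apply_of_map_oneL2 hT1]) hc hcontr (oneL2 m)
  have hφ1 : ∫ x, φ x ∂m = 1 := by rw [← hℓ, hℓφ, hℓ, integral_oneL2]
  refine ⟨φ, ⟨hφ, hφ1, ?_⟩, fun ψ hψ hψ1 ↦ eq_of_isFixedPt_of_apply_eq hc hcontr hψ hφ ?_⟩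
  · refine ge_of_tendsto' htends fun n ↦ ?_
    induction n with
    | zero => exact oneL2_nonneg
    | succ n ih => rw [iterate_succ_apply']; exact hpos _ ih
  · rw [hℓ, hℓ, hψ1, hφ1]

/-- Let `(X,m)` be a probability space, `κ > 0`, `p ∈ (0,1)`, and `P`, `Q` bounded operators
on the real Hilbert space `L²(X,m)` such that: (1) the cone of nonnegative functions is
invariant under `P*` and `Q*`; (2) `P𝟙 = Q𝟙 = 𝟙`; (3) `‖P*f‖ ≤ (1−κ)‖f‖` whenever
`∫ f dm = 0`; (4) `‖Q*‖ < 1 + κp/(1−p)`. Then `T* = (pP + (1−p)Q)*` has a unique fixed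
vector `φ` with `⟨φ,𝟙⟩ = ∫ φ dm = 1`, and moreover `φ ≥ 0`. -/
theorem unique_positive_fixed_vector
    {X : Type*} [MeasurableSpace X] (m : Measure X) [IsProbabilityMeasure m]
    (κ p : ℝ) (hκ : 0 < κ) (hp0 : 0 < p) (hp1 : p < 1)
    (P Q : Lp ℝ 2 m →L[ℝ] Lp ℝ 2 m)
    (hPpos : ∀ f : Lp ℝ 2 m, 0 ≤ f → 0 ≤ ContinuousLinearMap.adjoint P f)
    (hQpos : ∀ f : Lp ℝ 2 m, 0 ≤ f → 0 ≤ ContinuousLinearMap.adjoint Q f)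
    (hP1 : P (oneL2 m) = oneL2 m) (hQ1 : Q (oneL2 m) = oneL2 m)
    (hPgap : ∀ f : Lp ℝ 2 m, (∫ x, f x ∂m) = 0 →
      ‖ContinuousLinearMap.adjoint P f‖ ≤ (1 - κ) * ‖f‖)
    (hQnorm : ‖ContinuousLinearMap.adjoint Q‖ < 1 + κ * p / (1 - p)) :
    ∃ φ : Lp ℝ 2 m,
      (ContinuousLinearMap.adjoint (p • P + (1 - p) • Q) φ = φ ∧ (∫ x, φ x ∂m) = 1 ∧ 0 ≤ φ) ∧
      ∀ ψ : Lp ℝ 2 m,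
        ContinuousLinearMap.adjoint (p • P + (1 - p) • Q) ψ = ψ → (∫ x, ψ x ∂m) = 1 →
        ψ = φ :=
  unique_positive_fixed_vector_general m κ p hp0 hp1 P Q hPpos hQpos hP1 hQ1 hPgap hQnorm
end

section
/- For every real t > 0, the integral ∫₀^∞ [e^{t/2}·(1+r²)/(1+e^t·r²)] · [2r/(1+r²)²] dr equals (t/2)/sinh(t/2). -/
/-!
With `a = e^t` the integrand is `e^{t/2} · 2r / ((1 + a r²)(1 + r²))`, and partial fractions give
`2r / ((1 + a r²)(1 + r²)) = (2ar/(1 + a r²) - 2r/(1 + r²)) / (a - 1)`, whose primitive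
`(log (1 + a r²) - log (1 + r²)) / (a - 1)` vanishes at `0` and tends to `log a / (a - 1)`
at infinity. Finally `e^{t/2} · t / (e^t - 1) = (t/2) / sinh (t/2)`.
-/

open MeasureTheory Filter Topology Real Set

lemma one_add_mul_sq_pos {a : ℝ} (ha : 0 ≤ a) (r : ℝ) : 0 < 1 + a * r ^ 2 := by
  positivity

lemma hasDerivAt_log_one_add_mul_sq {a : ℝ} (ha : 0 ≤ a) (r : ℝ) :
    HasDerivAt (fun r => log (1 + a * r ^ 2)) (2 * a * r / (1 + a * r ^ 2)) r := by
  convert (((hasDerivAt_pow 2 r).const_mul a).const_add 1).log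
    (one_add_mul_sq_pos ha r).ne' using 1
  ring

lemma one_add_mul_sq_div_one_add_sq (a r : ℝ) :
    (1 + a * r ^ 2) / (1 + r ^ 2) = a + (1 - a) * (1 + r ^ 2)⁻¹ := by
  field_simp
  ring

lemma tendsto_log_one_add_mul_sq_sub_log_one_add_sq {a : ℝ} (ha : 0 < a) :
    Tendsto (fun r => log (1 + a * r ^ 2) - log (1 + r ^ 2)) atTop (𝓝 (log a)) := by
  have hinv : Tendsto (fun r : ℝ => (1 + r ^ 2)⁻¹) atTop (𝓝 0) :=
    tendsto_inv_atTop_zero.comp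
      (tendsto_atTop_add_const_left _ 1 (tendsto_pow_atTop two_ne_zero))
  have hratio : Tendsto (fun r : ℝ => (1 + a * r ^ 2) / (1 + r ^ 2)) atTop (𝓝 a) := by
    simpa [one_add_mul_sq_div_one_add_sq] using (hinv.const_mul (1 - a)).const_add a
  refine ((continuousAt_log ha.ne').tendsto.comp hratio).congr fun r => ?_
  simpa using log_div (one_add_mul_sq_pos ha.le r).ne' (one_add_mul_sq_pos zero_le_one r).ne'

theorem integral_Ioi_two_mul_div_one_add_mul_sq_mul_one_add_sq {a : ℝ} (ha : 0 < a)
    (ha1 : a ≠ 1) :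
    ∫ r in Ioi (0 : ℝ), 2 * r / ((1 + a * r ^ 2) * (1 + r ^ 2)) = log a / (a - 1) := by
  have hderiv : ∀ r ∈ Ici (0 : ℝ),
      HasDerivAt (fun r => (log (1 + a * r ^ 2) - log (1 + r ^ 2)) / (a - 1))
        (2 * r / ((1 + a * r ^ 2) * (1 + r ^ 2))) r := by
    intro r _
    have hlog_one_add_sq := hasDerivAt_log_one_add_mul_sq zero_le_one r
    simp only [one_mul, mul_one] at hlog_one_add_sq
    refine (((hasDerivAt_log_one_add_mul_sq ha.le r).sub hlog_one_add_sq).div_const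
      (a - 1)).congr_deriv ?_
    have := one_add_mul_sq_pos ha.le r
    field_simp [sub_ne_zero.mpr ha1]
    ring
  have hnonneg : ∀ r ∈ Ioi (0 : ℝ), 0 ≤ 2 * r / ((1 + a * r ^ 2) * (1 + r ^ 2)) := by
    intro r (hr : 0 < r)
    have := one_add_mul_sq_pos ha.le r
    positivity
  rw [integral_Ioi_of_hasDerivAt_of_nonneg' hderiv hnonneg
    ((tendsto_log_one_add_mul_sq_sub_log_one_add_sq ha).div_const (a - 1))]
  simp

lemma exp_sub_one_eq_two_mul_exp_half_mul_sinh_half (t : ℝ) :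
    exp t - 1 = 2 * exp (t / 2) * sinh (t / 2) := by
  have hsq : exp t = exp (t / 2) * exp (t / 2) := by rw [← exp_add, add_halves]
  have hinv : exp (t / 2) * exp (-(t / 2)) = 1 := by rw [← exp_add, add_neg_cancel, exp_zero]
  rw [sinh_eq, hsq]
  linear_combination hinv

/-- For every real `t > 0`,
`∫₀^∞ [e^{t/2}·(1+r²)/(1+e^t·r²)] · [2r/(1+r²)²] dr = (t/2)/sinh(t/2)`. -/
theorem integral_matrix_coefficient (t : ℝ) (ht : 0 < t) :
    ∫ r in Set.Ioi (0 : ℝ),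
        (Real.exp (t / 2) * (1 + r ^ 2) / (1 + Real.exp t * r ^ 2)) *
          (2 * r / (1 + r ^ 2) ^ 2) =
      (t / 2) / Real.sinh (t / 2) := by
  have hintegrand : ∀ r : ℝ,
      (exp (t / 2) * (1 + r ^ 2) / (1 + exp t * r ^ 2)) * (2 * r / (1 + r ^ 2) ^ 2) =
        exp (t / 2) * (2 * r / ((1 + exp t * r ^ 2) * (1 + r ^ 2))) := by
    intro r
    have := one_add_mul_sq_pos (exp_pos t).le r
    field_simp
  have hsinh : 0 < sinh (t / 2) := sinh_pos_iff.mpr (half_pos ht)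
  simp_rw [hintegrand]
  rw [integral_const_mul, integral_Ioi_two_mul_div_one_add_mul_sq_mul_one_add_sq (exp_pos t)
    ((exp_eq_one_iff t).not.mpr ht.ne'), log_exp, exp_sub_one_eq_two_mul_exp_half_mul_sinh_half]
  field_simp
end

section
/- Let H be a Hilbert space, H₁ and H₂ closed subspaces, and let δ = 1 − sup{ |⟨f₁,f₂⟩| / (‖f₁‖·‖f₂‖) : f₁ ∈ H₁∖{0}, f₂ ∈ H₂∖{0} } be their angular separation. Let κ ∈ (0,1], and let P₁, P₂ be bounded self-adjoint operators on H with ‖P_i‖ ≤ 1, such that P_i h = h for all h ∈ H_i, and ‖P_i g‖ ≤ (1−κ)‖g‖ for all g in the orthogonal complement H_i^⊥ (i = 1,2). Then the average P = ½(P₁ + P₂) satisfies ‖P‖ ≤ 1 − κ·δ²/36. -/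
/-!
If `‖P₁ x + P₂ x‖ > 2 (1 - κδ²/36)` for a unit vector `x`, then both `‖Pᵢ x‖` are close to `1`.
Writing `x = hᵢ + gᵢ` with `hᵢ ∈ Hᵢ`, `gᵢ ∈ Hᵢᗮ`, symmetry of `Pᵢ` keeps `Pᵢ gᵢ` in `Hᵢᗮ`, so
Pythagoras gives `‖Pᵢ x‖² + κ‖gᵢ‖² ≤ 1` and both `gᵢ` are small. Then `h₁, h₂` are almost unit
vectors with `h₁ - h₂ = g₂ - g₁` small, contradicting `‖h₁ - h₂‖² ≥ 2δ‖h₁‖‖h₂‖`, which is what the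
angular separation says.
-/

open scoped RealInnerProductSpace

/-- The angular separation bound between two closed subspaces:
`δ(H₁,H₂) = 1 − sup{ |⟨f₁,f₂⟩| / (‖f₁‖·‖f₂‖) : fᵢ ∈ Hᵢ ∖ {0} }`. -/
noncomputable def angularSeparation {𝕜 H : Type*} [RCLike 𝕜] [NormedAddCommGroup H]
    [InnerProductSpace 𝕜 H] (H₁ H₂ : Submodule 𝕜 H) : ℝ :=
  1 - sSup {c : ℝ | ∃ f₁ f₂ : H, f₁ ∈ H₁ ∧ f₁ ≠ 0 ∧ f₂ ∈ H₂ ∧ f₂ ≠ 0 ∧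
    c = ‖(inner 𝕜 f₁ f₂ : 𝕜)‖ / (‖f₁‖ * ‖f₂‖)}

open scoped InnerProductSpace

section

variable {𝕜 H : Type*} [RCLike 𝕜] [NormedAddCommGroup H] [InnerProductSpace 𝕜 H]

section angularSeparation

variable (H₁ H₂ : Submodule 𝕜 H)

lemma angularSeparation_nonneg : 0 ≤ angularSeparation H₁ H₂ := by
  refine sub_nonneg.mpr (Real.sSup_le ?_ zero_le_one)
  rintro c ⟨f₁, f₂, -, -, -, -, rfl⟩
  exact div_le_one_of_le₀ (norm_inner_le_norm f₁ f₂) (by positivity)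

lemma angularSeparation_le_one : angularSeparation H₁ H₂ ≤ 1 := by
  refine sub_le_self _ (Real.sSup_nonneg ?_)
  rintro c ⟨f₁, f₂, -, -, -, -, rfl⟩
  positivity

variable {H₁ H₂}

lemma norm_inner_le_one_sub_angularSeparation_mul {h₁ h₂ : H} (hh₁ : h₁ ∈ H₁) (hh₂ : h₂ ∈ H₂) :
    ‖⟪h₁, h₂⟫_𝕜‖ ≤ (1 - angularSeparation H₁ H₂) * (‖h₁‖ * ‖h₂‖) := by
  rcases eq_or_ne h₁ 0 with rfl | hne₁
  · simp
  rcases eq_or_ne h₂ 0 with rfl | hne₂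
  · simp
  have hpos : 0 < ‖h₁‖ * ‖h₂‖ := by positivity
  rw [← div_le_iff₀ hpos, angularSeparation, sub_sub_cancel]
  refine le_csSup ⟨1, ?_⟩ ⟨h₁, h₂, hh₁, hne₁, hh₂, hne₂, rfl⟩
  rintro c ⟨f₁, f₂, -, -, -, -, rfl⟩
  exact div_le_one_of_le₀ (norm_inner_le_norm f₁ f₂) (by positivity)

lemma two_mul_angularSeparation_mul_le_norm_sub_sq {h₁ h₂ : H} (hh₁ : h₁ ∈ H₁)
    (hh₂ : h₂ ∈ H₂) :
    2 * angularSeparation H₁ H₂ * (‖h₁‖ * ‖h₂‖) ≤ ‖h₁ - h₂‖ ^ 2 := by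
  have hre : RCLike.re ⟪h₁, h₂⟫_𝕜 ≤ (1 - angularSeparation H₁ H₂) * (‖h₁‖ * ‖h₂‖) :=
    (RCLike.re_le_norm _).trans (norm_inner_le_one_sub_angularSeparation_mul hh₁ hh₂)
  rw [norm_sub_sq (𝕜 := 𝕜)]
  nlinarith [sq_nonneg (‖h₁‖ - ‖h₂‖)]

end angularSeparation

lemma Submodule.norm_add_sq_of_mem_of_mem_orthogonal (K : Submodule 𝕜 H) {h g : H} (hh : h ∈ K)
    (hg : g ∈ Kᗮ) : ‖h + g‖ ^ 2 = ‖h‖ ^ 2 + ‖g‖ ^ 2 := by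
  simpa only [sq] using
    norm_add_sq_eq_norm_sq_add_norm_sq_of_inner_eq_zero h g (K.inner_right_of_mem_orthogonal hh hg)

namespace LinearMap.IsSymmetric

variable {K : Submodule 𝕜 H} {P : H →ₗ[𝕜] H}

lemma apply_mem_orthogonal (hP : P.IsSymmetric) (hfix : ∀ h ∈ K, P h = h) {g : H}
    (hg : g ∈ Kᗮ) : P g ∈ Kᗮ := by
  intro h hh
  rw [← hP h g, hfix h hh]
  exact hg h hh

lemma norm_apply_sq_add_mul_norm_sq_le (hP : P.IsSymmetric) (hfix : ∀ h ∈ K, P h = h)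
    {κ : ℝ} (hκ0 : 0 ≤ κ) (hκ1 : κ ≤ 1) (hcon : ∀ g ∈ Kᗮ, ‖P g‖ ≤ (1 - κ) * ‖g‖)
    {h g : H} (hh : h ∈ K) (hg : g ∈ Kᗮ) :
    ‖P (h + g)‖ ^ 2 + κ * ‖g‖ ^ 2 ≤ ‖h + g‖ ^ 2 := by
  have hPg : ‖P g‖ ^ 2 ≤ (1 - κ) * ‖g‖ ^ 2 :=
    calc ‖P g‖ ^ 2 ≤ ((1 - κ) * ‖g‖) ^ 2 := by gcongr; exact hcon g hg
      _ ≤ (1 - κ) * ‖g‖ ^ 2 := by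
        nlinarith [mul_nonneg (mul_nonneg hκ0 (sub_nonneg.2 hκ1)) (sq_nonneg ‖g‖)]
  rw [map_add, hfix h hh, K.norm_add_sq_of_mem_of_mem_orthogonal hh hg,
    K.norm_add_sq_of_mem_of_mem_orthogonal hh (hP.apply_mem_orthogonal hfix hg)]
  linarith

end LinearMap.IsSymmetric

section average

variable {H₁ H₂ : Submodule 𝕜 H} [H₁.HasOrthogonalProjection] [H₂.HasOrthogonalProjection]
  {P₁ P₂ : H →ₗ[𝕜] H} {κ : ℝ}

lemma norm_apply_add_apply_le_of_norm_eq_one (hP₁ : P₁.IsSymmetric) (hP₂ : P₂.IsSymmetric)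
    (hfix₁ : ∀ h ∈ H₁, P₁ h = h) (hfix₂ : ∀ h ∈ H₂, P₂ h = h) (hκ0 : 0 < κ) (hκ1 : κ ≤ 1)
    (hcon₁ : ∀ g ∈ H₁ᗮ, ‖P₁ g‖ ≤ (1 - κ) * ‖g‖) (hcon₂ : ∀ g ∈ H₂ᗮ, ‖P₂ g‖ ≤ (1 - κ) * ‖g‖)
    {x : H} (hx : ‖x‖ = 1) :
    ‖P₁ x + P₂ x‖ ≤ 2 * (1 - κ * angularSeparation H₁ H₂ ^ 2 / 36) := by
  set δ := angularSeparation H₁ H₂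
  have hδ0 : 0 ≤ δ := angularSeparation_nonneg H₁ H₂
  have hδ1 : δ ≤ 1 := angularSeparation_le_one H₁ H₂
  obtain ⟨h₁, hh₁, g₁, hg₁, hx₁⟩ := H₁.exists_add_mem_mem_orthogonal x
  obtain ⟨h₂, hh₂, g₂, hg₂, hx₂⟩ := H₂.exists_add_mem_mem_orthogonal x
  have hbound₁ := hP₁.norm_apply_sq_add_mul_norm_sq_le hfix₁ hκ0.le hκ1 hcon₁ hh₁ hg₁
  have hbound₂ := hP₂.norm_apply_sq_add_mul_norm_sq_le hfix₂ hκ0.le hκ1 hcon₂ hh₂ hg₂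
  rw [← hx₁, hx, one_pow] at hbound₁
  rw [← hx₂, hx, one_pow] at hbound₂
  have hle₁ : ‖P₁ x‖ ≤ 1 := by nlinarith [norm_nonneg (P₁ x), norm_nonneg g₁]
  have hle₂ : ‖P₂ x‖ ≤ 1 := by nlinarith [norm_nonneg (P₂ x), norm_nonneg g₂]
  by_contra! hlarge
  -- `κ‖gᵢ‖² ≤ 1 - ‖Pᵢ x‖² < 1 - (1 - κδ²/18)² ≤ κδ²/9`
  have hg₁_sq : ‖g₁‖ ^ 2 < δ ^ 2 / 9 := by
    have : 1 - κ * δ ^ 2 / 18 < ‖P₁ x‖ := by linarith [norm_add_le (P₁ x) (P₂ x)]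
    nlinarith
  have hg₂_sq : ‖g₂‖ ^ 2 < δ ^ 2 / 9 := by
    have : 1 - κ * δ ^ 2 / 18 < ‖P₂ x‖ := by linarith [norm_add_le (P₁ x) (P₂ x)]
    nlinarith
  have hh₁_sq : 8 / 9 ≤ ‖h₁‖ ^ 2 := by
    nlinarith [hx₁ ▸ H₁.norm_add_sq_of_mem_of_mem_orthogonal hh₁ hg₁]
  have hh₂_sq : 8 / 9 ≤ ‖h₂‖ ^ 2 := by
    nlinarith [hx₂ ▸ H₂.norm_add_sq_of_mem_of_mem_orthogonal hh₂ hg₂]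
  have hclose : ‖h₁ - h₂‖ ^ 2 < 4 * δ ^ 2 / 9 := by
    have : h₁ - h₂ = g₂ - g₁ := by rw [sub_eq_sub_iff_add_eq_add, ← hx₁, add_comm, ← hx₂]
    rw [this]
    nlinarith [norm_sub_le g₂ g₁, norm_nonneg (g₂ - g₁), sq_nonneg (‖g₁‖ - ‖g₂‖)]
  have hfar : 2 * δ * (8 / 9) ≤ ‖h₁ - h₂‖ ^ 2 := by
    refine le_trans ?_ (two_mul_angularSeparation_mul_le_norm_sub_sq hh₁ hh₂)
    have hsq : (8 / 9) ^ 2 ≤ (‖h₁‖ * ‖h₂‖) ^ 2 := by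
      rw [mul_pow]
      nlinarith
    have : 8 / 9 ≤ ‖h₁‖ * ‖h₂‖ := le_of_pow_le_pow_left₀ two_ne_zero (by positivity) hsq
    gcongr
  nlinarith

end average

end

theorem norm_average_le_of_angular_separation_general
    {𝕜 H : Type*} [RCLike 𝕜] [NormedAddCommGroup H] [InnerProductSpace 𝕜 H]
    [CompleteSpace H]
    (H₁ H₂ : Submodule 𝕜 H) (hc₁ : IsClosed (H₁ : Set H)) (hc₂ : IsClosed (H₂ : Set H))
    (δ : ℝ) (hδ : δ = angularSeparation H₁ H₂)
    (κ : ℝ) (hκ0 : 0 < κ) (hκ1 : κ ≤ 1)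
    (P₁ P₂ : H →L[𝕜] H)
    (hsa₁ : IsSelfAdjoint P₁) (hsa₂ : IsSelfAdjoint P₂)
    (hfix₁ : ∀ h ∈ H₁, P₁ h = h) (hfix₂ : ∀ h ∈ H₂, P₂ h = h)
    (hcon₁ : ∀ g ∈ H₁ᗮ, ‖P₁ g‖ ≤ (1 - κ) * ‖g‖)
    (hcon₂ : ∀ g ∈ H₂ᗮ, ‖P₂ g‖ ≤ (1 - κ) * ‖g‖) :
    ‖((2 : 𝕜)⁻¹) • (P₁ + P₂)‖ ≤ 1 - κ * δ ^ 2 / 36 := by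
  subst hδ
  have : CompleteSpace H₁ := hc₁.completeSpace_coe
  have : CompleteSpace H₂ := hc₂.completeSpace_coe
  have hδ0 := angularSeparation_nonneg H₁ H₂
  have hδ1 := angularSeparation_le_one H₁ H₂
  have hκδ : κ * angularSeparation H₁ H₂ ^ 2 ≤ 1 :=
    mul_le_one₀ hκ1 (sq_nonneg _) (pow_le_one₀ hδ0 hδ1)
  refine ContinuousLinearMap.opNorm_le_of_unit_norm (by linarith) fun x hx => ?_
  have key : ‖P₁ x + P₂ x‖ ≤ _ := norm_apply_add_apply_le_of_norm_eq_one
    hsa₁.isSymmetric hsa₂.isSymmetric hfix₁ hfix₂ hκ0 hκ1 hcon₁ hcon₂ hx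
  rw [smul_apply, add_apply, norm_smul, norm_inv, RCLike.norm_two]
  linarith

/-- If `P₁, P₂` are self-adjoint contractions on a Hilbert space `H`, `Pᵢ` fixes the closed
subspace `Hᵢ` pointwise and is a `(1−κ)`-contraction on `Hᵢ^⊥`, and the closed subspaces
`H₁, H₂` have angular separation `δ`, then `‖½(P₁+P₂)‖ ≤ 1 − κδ²/36`. -/
theorem norm_average_le_of_angular_separation
    {𝕜 H : Type*} [RCLike 𝕜] [NormedAddCommGroup H] [InnerProductSpace 𝕜 H]
    [CompleteSpace H]
    (H₁ H₂ : Submodule 𝕜 H) (hc₁ : IsClosed (H₁ : Set H)) (hc₂ : IsClosed (H₂ : Set H))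
    (δ : ℝ) (hδ : δ = angularSeparation H₁ H₂)
    (κ : ℝ) (hκ0 : 0 < κ) (hκ1 : κ ≤ 1)
    (P₁ P₂ : H →L[𝕜] H)
    (hsa₁ : IsSelfAdjoint P₁) (hsa₂ : IsSelfAdjoint P₂)
    (hn₁ : ‖P₁‖ ≤ 1) (hn₂ : ‖P₂‖ ≤ 1)
    (hfix₁ : ∀ h ∈ H₁, P₁ h = h) (hfix₂ : ∀ h ∈ H₂, P₂ h = h)
    (hcon₁ : ∀ g ∈ H₁ᗮ, ‖P₁ g‖ ≤ (1 - κ) * ‖g‖)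
    (hcon₂ : ∀ g ∈ H₂ᗮ, ‖P₂ g‖ ≤ (1 - κ) * ‖g‖) :
    ‖((2 : 𝕜)⁻¹) • (P₁ + P₂)‖ ≤ 1 - κ * δ ^ 2 / 36 :=
  norm_average_le_of_angular_separation_general H₁ H₂ hc₁ hc₂ δ hδ κ hκ0 hκ1 P₁ P₂ hsa₁ hsa₂ hfix₁
    hfix₂ hcon₁ hcon₂
end

section
/- Let H be a Hilbert space and H₁, H₂ closed subspaces with angular separation δ = 1 − sup{ |⟨f₁,f₂⟩| / (‖f₁‖·‖f₂‖) : f₁ ∈ H₁∖{0}, f₂ ∈ H₂∖{0} } satisfying 0 < δ ≤ 1. Let f ∈ H be a unit vector and write f = f₁ + g₁ = f₂ + g₂ with f_i ∈ H_i and g_i ∈ H_i^⊥ (i = 1,2). Then max(‖g₁‖, ‖g₂‖) > δ/3. -/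
/-!
Write `a = ‖g₁‖`, `b = ‖g₂‖`. Expanding `⟪f₁, f₂⟫ = ⟪f - g₁, f - g₂⟫` with `⟪g₁, f⟫ = a²` and
`⟪f, g₂⟫ = b²` gives `‖⟪f₁, f₂⟫‖ ≥ 1 - a² - b² - ab`, while the definition of `δ` gives
`‖⟪f₁, f₂⟫‖ ≤ (1 - δ) ‖f₁‖ ‖f₂‖ ≤ 1 - δ`. Hence `δ ≤ a² + b² + ab`, which is at most `δ² / 3 < δ`
if both `a, b ≤ δ / 3`.
-/

open RCLike

section
variable {𝕜 E : Type*} [RCLike 𝕜] [NormedAddCommGroup E] [InnerProductSpace 𝕜 E]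

local notation "⟪" x ", " y "⟫" => inner 𝕜 x y

theorem norm_inner_le_one_sub_angularSeparation_mul_s13 {K₁ K₂ : Submodule 𝕜 E} {u v : E}
    (hu : u ∈ K₁) (hv : v ∈ K₂) :
    ‖⟪u, v⟫‖ ≤ (1 - angularSeparation K₁ K₂) * (‖u‖ * ‖v‖) := by
  rcases eq_or_ne u 0 with rfl | hu0
  · simp
  rcases eq_or_ne v 0 with rfl | hv0
  · simp
  have huv : 0 < ‖u‖ * ‖v‖ := by positivity
  rw [angularSeparation, sub_sub_cancel, ← div_le_iff₀ huv]
  refine le_csSup ⟨1, ?_⟩ ⟨u, v, hu, hu0, hv, hv0, rfl⟩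
  rintro _ ⟨x, y, -, hx, -, hy, rfl⟩
  exact div_le_one_of_le₀ (norm_inner_le_norm x y) (by positivity)

theorem norm_le_norm_add_of_mem_orthogonal {K : Submodule 𝕜 E} {u g : E}
    (hu : u ∈ K) (hg : g ∈ Kᗮ) : ‖u‖ ≤ ‖u + g‖ := by
  have h := norm_add_sq_eq_norm_sq_add_norm_sq_of_inner_eq_zero u g
    (K.inner_right_of_mem_orthogonal hu hg)
  nlinarith [norm_nonneg u, norm_nonneg (u + g), sq_nonneg ‖g‖]

theorem re_inner_add_self_of_mem_orthogonal {K : Submodule 𝕜 E} {u g : E}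
    (hu : u ∈ K) (hg : g ∈ Kᗮ) : re ⟪g, u + g⟫ = ‖g‖ ^ 2 := by
  rw [inner_add_right, K.inner_left_of_mem_orthogonal hu hg, zero_add, inner_self_eq_norm_sq]

theorem norm_sq_sub_le_norm_inner {K₁ K₂ : Submodule 𝕜 E} {f₁ g₁ f₂ g₂ : E}
    (hf₁ : f₁ ∈ K₁) (hg₁ : g₁ ∈ K₁ᗮ) (hf₂ : f₂ ∈ K₂) (hg₂ : g₂ ∈ K₂ᗮ)
    (hsum : f₁ + g₁ = f₂ + g₂) :
    ‖f₁ + g₁‖ ^ 2 - ‖g₁‖ ^ 2 - ‖g₂‖ ^ 2 - ‖g₁‖ * ‖g₂‖ ≤ ‖⟪f₁, f₂⟫‖ := by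
  set f := f₁ + g₁
  have h₁ : re ⟪g₁, f⟫ = ‖g₁‖ ^ 2 := re_inner_add_self_of_mem_orthogonal hf₁ hg₁
  have h₂ : re ⟪f, g₂⟫ = ‖g₂‖ ^ 2 := by
    rw [← inner_conj_symm, conj_re, hsum, re_inner_add_self_of_mem_orthogonal hf₂ hg₂]
  have hexp : re ⟪f₁, f₂⟫ = ‖f‖ ^ 2 - ‖g₁‖ ^ 2 - ‖g₂‖ ^ 2 + re ⟪g₁, g₂⟫ := by
    rw [show f₁ = f - g₁ by simp [f], show f₂ = f - g₂ by rw [hsum]; abel,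
      inner_sub_left, inner_sub_right, inner_sub_right, map_sub, map_sub, map_sub,
      inner_self_eq_norm_sq, h₁, h₂]
    ring
  calc ‖f‖ ^ 2 - ‖g₁‖ ^ 2 - ‖g₂‖ ^ 2 - ‖g₁‖ * ‖g₂‖
      ≤ ‖f‖ ^ 2 - ‖g₁‖ ^ 2 - ‖g₂‖ ^ 2 + re ⟪g₁, g₂⟫ := by
        linarith [neg_le_of_abs_le ((abs_re_le_norm _).trans (norm_inner_le_norm (𝕜 := 𝕜) g₁ g₂))]
    _ = re ⟪f₁, f₂⟫ := hexp.symm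
    _ ≤ ‖⟪f₁, f₂⟫‖ := re_le_norm _

end

theorem not_close_to_both_subspaces_general
    {𝕜 H : Type*} [RCLike 𝕜] [NormedAddCommGroup H] [InnerProductSpace 𝕜 H]
    (H₁ H₂ : Submodule 𝕜 H)
    (δ : ℝ) (hδ : δ = angularSeparation H₁ H₂) (hδ0 : 0 < δ) (hδ1 : δ ≤ 1)
    (f f₁ g₁ f₂ g₂ : H) (hf : ‖f‖ = 1)
    (hf₁ : f₁ ∈ H₁) (hg₁ : g₁ ∈ H₁ᗮ) (hsum₁ : f = f₁ + g₁)
    (hf₂ : f₂ ∈ H₂) (hg₂ : g₂ ∈ H₂ᗮ) (hsum₂ : f = f₂ + g₂) :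
    δ / 3 < max ‖g₁‖ ‖g₂‖ := by
  by_contra! hsmall
  have ha : ‖g₁‖ ≤ δ / 3 := (le_max_left _ _).trans hsmall
  have hb : ‖g₂‖ ≤ δ / 3 := (le_max_right _ _).trans hsmall
  have hlow := norm_sq_sub_le_norm_inner hf₁ hg₁ hf₂ hg₂ (hsum₁.symm.trans hsum₂)
  rw [← hsum₁, hf] at hlow
  have hn₁ : ‖f₁‖ ≤ 1 := by
    rw [← hf, hsum₁]; exact norm_le_norm_add_of_mem_orthogonal hf₁ hg₁
  have hn₂ : ‖f₂‖ ≤ 1 := by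
    rw [← hf, hsum₂]; exact norm_le_norm_add_of_mem_orthogonal hf₂ hg₂
  have hup : ‖inner 𝕜 f₁ f₂‖ ≤ 1 - δ :=
    calc ‖inner 𝕜 f₁ f₂‖ ≤ (1 - δ) * (‖f₁‖ * ‖f₂‖) :=
          hδ ▸ norm_inner_le_one_sub_angularSeparation_mul_s13 hf₁ hf₂
      _ ≤ 1 - δ := mul_le_of_le_one_right (by linarith)
          (mul_le_one₀ hn₁ (norm_nonneg _) hn₂)
  nlinarith [mul_le_mul ha hb (norm_nonneg _) (by positivity), norm_nonneg g₁, norm_nonneg g₂]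

/-- If `H₁, H₂` are closed subspaces of a Hilbert space with angular separation
`δ ∈ (0,1]`, and a unit vector `f` decomposes orthogonally as `f = f₁ + g₁ = f₂ + g₂`
with `fᵢ ∈ Hᵢ` and `gᵢ ∈ Hᵢ^⊥`, then `max(‖g₁‖,‖g₂‖) > δ/3`. -/
theorem not_close_to_both_subspaces
    {𝕜 H : Type*} [RCLike 𝕜] [NormedAddCommGroup H] [InnerProductSpace 𝕜 H]
    [CompleteSpace H]
    (H₁ H₂ : Submodule 𝕜 H) (hc₁ : IsClosed (H₁ : Set H)) (hc₂ : IsClosed (H₂ : Set H))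
    (δ : ℝ) (hδ : δ = angularSeparation H₁ H₂) (hδ0 : 0 < δ) (hδ1 : δ ≤ 1)
    (f f₁ g₁ f₂ g₂ : H) (hf : ‖f‖ = 1)
    (hf₁ : f₁ ∈ H₁) (hg₁ : g₁ ∈ H₁ᗮ) (hsum₁ : f = f₁ + g₁)
    (hf₂ : f₂ ∈ H₂) (hg₂ : g₂ ∈ H₂ᗮ) (hsum₂ : f = f₂ + g₂) :
    δ / 3 < max ‖g₁‖ ‖g₂‖ :=
  not_close_to_both_subspaces_general H₁ H₂ δ hδ hδ0 hδ1 f f₁ g₁ f₂ g₂ hf hf₁ hg₁ hsum₁ hf₂ hg₂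
    hsum₂
end

section
/- Let H be a Hilbert space, e ∈ H a unit vector, and κ ∈ (0,1]. Let P be a bounded self-adjoint operator on H with ‖P‖ ≤ 1, Pe = e, and ‖Pg‖ ≤ (1−κ)‖g‖ for every g orthogonal to e. Let f ∈ H be a unit vector with ⟨f,e⟩ = 1−δ for some δ ∈ [0,1], and suppose ‖Pf‖ ≥ 1−η for some η ≥ 0. Then κ·δ ≤ 2η. -/
/-!
Split `f = c • e + f₀` with `c = ⟪e, f⟫` and `f₀ ⊥ e`. Since `P` is self-adjoint and fixes `e`,
`P f = c • e + P f₀` with `P f₀ ⊥ e`, so by Pythagoras and the gap on `e⊥`,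
`‖P f‖² ≤ ‖c‖² + (1 - κ)² ‖f₀‖² ≤ ‖f‖² - κ ‖f₀‖²`. For the unit vector `f` with `c = 1 - δ` this
gives `1 - 2η ≤ ‖P f‖² ≤ 1 - κ δ (2 - δ) ≤ 1 - κ δ`.
-/

open scoped InnerProductSpace

section

variable {𝕜 H : Type*} [RCLike 𝕜] [NormedAddCommGroup H] [InnerProductSpace 𝕜 H]

theorem inner_sub_inner_smul_left_eq_zero {e : H} (he : ‖e‖ = 1) (f : H) :
    ⟪f - ⟪e, f⟫_𝕜 • e, e⟫_𝕜 = 0 := by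
  rw [inner_sub_left, inner_smul_left, inner_self_eq_one_of_norm_eq_one he, mul_one,
    inner_conj_symm, sub_self]

theorem norm_smul_add_sq_of_inner_eq_zero {e g : H} (he : ‖e‖ = 1) (hg : ⟪g, e⟫_𝕜 = 0)
    (c : 𝕜) : ‖c • e + g‖ ^ 2 = ‖c‖ ^ 2 + ‖g‖ ^ 2 := by
  have horth : ⟪c • e, g⟫_𝕜 = 0 := by
    rw [inner_smul_left, ← inner_conj_symm, hg, map_zero, mul_zero]
  rw [sq, sq, sq, norm_add_sq_eq_norm_sq_add_norm_sq_of_inner_eq_zero _ _ horth, norm_smul, he,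
    mul_one]

theorem LinearMap.IsSymmetric.norm_apply_sq_le_of_spectral_gap {T : H →ₗ[𝕜] H}
    (hT : T.IsSymmetric) {e : H} (he : ‖e‖ = 1) (hTe : T e = e) {κ : ℝ} (hκ0 : 0 ≤ κ)
    (hκ1 : κ ≤ 1) (hgap : ∀ g : H, ⟪g, e⟫_𝕜 = 0 → ‖T g‖ ≤ (1 - κ) * ‖g‖) (f : H) :
    ‖T f‖ ^ 2 ≤ ‖f‖ ^ 2 - κ * ‖f - ⟪e, f⟫_𝕜 • e‖ ^ 2 := by
  set c := ⟪e, f⟫_𝕜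
  set f₀ := f - c • e
  have hf₀ : ⟪f₀, e⟫_𝕜 = 0 := inner_sub_inner_smul_left_eq_zero he f
  have hTf₀ : ⟪T f₀, e⟫_𝕜 = 0 := by rw [hT, hTe, hf₀]
  have hf : f = c • e + f₀ := by rw [add_sub_cancel]
  have hTf : T f = c • e + T f₀ := by rw [hf, map_add, map_smul, hTe]
  have hgap_sq : ‖T f₀‖ ^ 2 ≤ (1 - κ) ^ 2 * ‖f₀‖ ^ 2 := by
    rw [← mul_pow]
    exact pow_le_pow_left₀ (norm_nonneg _) (hgap f₀ hf₀) 2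
  rw [hTf, norm_smul_add_sq_of_inner_eq_zero he hTf₀, hf, norm_smul_add_sq_of_inner_eq_zero he hf₀]
  nlinarith [sq_nonneg ‖f₀‖, mul_nonneg hκ0 (sub_nonneg.2 hκ1)]

end

theorem almost_fixed_vector_close_to_fixed_general
    {𝕜 H : Type*} [RCLike 𝕜] [NormedAddCommGroup H] [InnerProductSpace 𝕜 H]
    [CompleteSpace H]
    (e : H) (he : ‖e‖ = 1)
    (κ : ℝ) (hκ0 : 0 < κ) (hκ1 : κ ≤ 1)
    (P : H →L[𝕜] H) (hsa : IsSelfAdjoint P) (hPe : P e = e)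
    (hgap : ∀ g : H, (inner 𝕜 g e : 𝕜) = 0 → ‖P g‖ ≤ (1 - κ) * ‖g‖)
    (f : H) (hf : ‖f‖ = 1)
    (δ : ℝ) (hδ0 : 0 ≤ δ) (hδ1 : δ ≤ 1) (hfe : (inner 𝕜 f e : 𝕜) = ((1 - δ : ℝ) : 𝕜))
    (η : ℝ) (hPf : 1 - η ≤ ‖P f‖) :
    κ * δ ≤ 2 * η := by
  have hef : ⟪e, f⟫_𝕜 = ((1 - δ : ℝ) : 𝕜) := by rw [← inner_conj_symm, hfe, RCLike.conj_ofReal]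
  have hf₀ : ‖f - ⟪e, f⟫_𝕜 • e‖ ^ 2 = δ * (2 - δ) := by
    have hpyth :=
      norm_smul_add_sq_of_inner_eq_zero he (inner_sub_inner_smul_left_eq_zero he f) ⟪e, f⟫_𝕜
    rw [add_sub_cancel, hf, hef, RCLike.norm_ofReal, sq_abs] at hpyth
    rw [hef]
    linarith
  have hupper := hsa.isSymmetric.norm_apply_sq_le_of_spectral_gap he hPe hκ0.le hκ1 hgap f
  rw [hf₀, hf, ContinuousLinearMap.coe_coe] at hupper
  have hlower : 1 - 2 * η ≤ ‖P f‖ ^ 2 := by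
    rcases le_or_gt 0 (1 - η) with hη1 | hη1
    · nlinarith [pow_le_pow_left₀ hη1 hPf 2, sq_nonneg η]
    · nlinarith [sq_nonneg ‖P f‖]
  nlinarith [mul_nonneg (mul_nonneg hκ0.le hδ0) (sub_nonneg.2 hδ1)]

/-- Let `P` be a self-adjoint contraction on a Hilbert space fixing a unit vector `e` and
contracting by `(1−κ)` on the orthogonal complement of `e`. If a unit vector `f` has
`⟨f,e⟩ = 1−δ` with `δ ∈ [0,1]` and `‖Pf‖ ≥ 1−η`, then `κδ ≤ 2η`. -/
theorem almost_fixed_vector_close_to_fixed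
    {𝕜 H : Type*} [RCLike 𝕜] [NormedAddCommGroup H] [InnerProductSpace 𝕜 H]
    [CompleteSpace H]
    (e : H) (he : ‖e‖ = 1)
    (κ : ℝ) (hκ0 : 0 < κ) (hκ1 : κ ≤ 1)
    (P : H →L[𝕜] H) (hsa : IsSelfAdjoint P) (hP : ‖P‖ ≤ 1) (hPe : P e = e)
    (hgap : ∀ g : H, (inner 𝕜 g e : 𝕜) = 0 → ‖P g‖ ≤ (1 - κ) * ‖g‖)
    (f : H) (hf : ‖f‖ = 1)
    (δ : ℝ) (hδ0 : 0 ≤ δ) (hδ1 : δ ≤ 1) (hfe : (inner 𝕜 f e : 𝕜) = ((1 - δ : ℝ) : 𝕜))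
    (η : ℝ) (hη : 0 ≤ η) (hPf : 1 - η ≤ ‖P f‖) :
    κ * δ ≤ 2 * η :=
  almost_fixed_vector_close_to_fixed_general e he κ hκ0 hκ1 P hsa hPe hgap f hf δ hδ0 hδ1 hfe η hPf
end
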